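/- Let k ≥ 1 be an integer and 0 < τ < π. Let f : [0,τ] → [0,∞) be continuous, not identically zero, sin^k-concave, and attaining its maximum at 0. Then τ ≤ π/2, and for every ε ∈ [0, π/2]: (∫₀^{min(ε,τ)} f(t) dt)/(∫₀^τ f(t) dt) ≥ (∫₀^ε cos(t)^k dt)/(∫₀^{π/2} cos(t)^k dt). -/

import Mathlib

/-- `f` is `sin^k`-concave on the interval `I` (of length `< π`). -/
def SinPowConcaveOn (k : ℕ) (I : Set ℝ) (f : ℝ → ℝ) : Prop :=
  ∀ x₁ ∈ I, ∀ x₂ ∈ I, x₁ ≠ x₂ → ∀ α : ℝ, 0 < α → α < 1 →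
    (Real.sin (α * |x₂ - x₁|) / Real.sin |x₂ - x₁|) * f x₁ ^ (1 / (k : ℝ)) +
        (Real.sin ((1 - α) * |x₂ - x₁|) / Real.sin |x₂ - x₁|) * f x₂ ^ (1 / (k : ℝ))
      ≤ f (α * x₁ + (1 - α) * x₂) ^ (1 / (k : ℝ))

/-!
With `g = f ^ (1/k)`, the three-point form of sin-concavity at `0 < u < t`, combined with
`g u ≤ g 0`, gives `g t ≤ g 0 * cos t` in the limit `u → 0`. This forces `τ ≤ π/2` and, fed
back into the three-point inequality, shows that `g / cos`, hence `f / cos ^ k`, is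
nonincreasing. A function whose ratio to a weight is nonincreasing puts at least the weight's
share of its mass on an initial segment (compare both with the ratio at the cut point), and
restricting `cos ^ k` from `[0, π/2]` to `[0, τ]` only increases the share of `[0, ε]`.
-/

open Real Set Filter Topology MeasureTheory intervalIntegral

abbrev SinConcaveOn (I : Set ℝ) (g : ℝ → ℝ) : Prop := SinPowConcaveOn 1 I g

namespace SinConcaveOn

variable {I : Set ℝ} {g : ℝ → ℝ} {τ : ℝ}

theorem sin_mul_add_sin_mul_le (hg : SinConcaveOn I g) {x₁ x x₂ : ℝ} (h₁ : x₁ ∈ I)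
    (h₂ : x₂ ∈ I) (hx₁ : x₁ < x) (hx₂ : x < x₂) (hπ : x₂ - x₁ < π) :
    sin (x₂ - x) * g x₁ + sin (x - x₁) * g x₂ ≤ sin (x₂ - x₁) * g x := by
  have hL : 0 < x₂ - x₁ := by linarith
  have hsin : 0 < sin (x₂ - x₁) := sin_pos_of_pos_of_lt_pi hL hπ
  have h := hg x₁ h₁ x₂ h₂ (hx₁.trans hx₂).ne ((x₂ - x) / (x₂ - x₁))
    (div_pos (by linarith) hL) ((div_lt_one hL).2 (by linarith))
  have e₁ : (x₂ - x) / (x₂ - x₁) * (x₂ - x₁) = x₂ - x := by field_simp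
  have e₂ : (1 - (x₂ - x) / (x₂ - x₁)) * (x₂ - x₁) = x - x₁ := by field_simp; ring
  have e₃ : (x₂ - x) / (x₂ - x₁) * x₁ + (1 - (x₂ - x) / (x₂ - x₁)) * x₂ = x := by
    field_simp; ring
  rw [abs_of_pos hL, e₁, e₂, e₃, Nat.cast_one, div_one, rpow_one, rpow_one, rpow_one,
    div_mul_eq_mul_div, div_mul_eq_mul_div, ← add_div, div_le_iff₀ hsin] at h
  linarith

theorem le_mul_cos (hg : SinConcaveOn (Icc 0 τ) g) (hτ : τ < π)
    (hmax : ∀ x ∈ Icc 0 τ, g x ≤ g 0) {t : ℝ} (ht : t ∈ Icc 0 τ) :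
    g t ≤ g 0 * cos t := by
  obtain rfl | ht0 := ht.1.eq_or_lt
  · simp
  have hsin : 0 < sin t := sin_pos_of_pos_of_lt_pi ht0 (ht.2.trans_lt hτ)
  -- the three-point inequality at `0 < 2v < t`, after halving the angle `2v`
  have key : ∀ v ∈ Ioo 0 (t / 2), cos v * (g t - g 0 * cos t) ≤ g 0 * sin t * sin v := by
    intro v hv
    have hsv : 0 < sin v := sin_pos_of_pos_of_lt_pi hv.1 (by linarith [hv.2, ht.2])
    have h3 := hg.sin_mul_add_sin_mul_le (left_mem_Icc.2 (ht0.le.trans ht.2)) ht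
      (x := 2 * v) (by linarith [hv.1]) (by linarith [hv.2]) (by linarith [ht.2])
    have hgv := mul_le_mul_of_nonneg_left
      (hmax (2 * v) ⟨by linarith [hv.1], by linarith [hv.2, ht.2]⟩) hsin.le
    rw [sub_zero, sub_zero, sin_sub, sin_two_mul, cos_two_mul, cos_sq'] at h3
    refine le_of_mul_le_mul_left ?_ (mul_pos two_pos hsv)
    linear_combination h3 + hgv
  have hlim₁ : Tendsto (fun v => cos v * (g t - g 0 * cos t)) (𝓝[>] 0)
      (𝓝 (g t - g 0 * cos t)) :=
    ((continuous_cos.mul continuous_const).tendsto' 0 _ (by simp)).mono_left nhdsWithin_le_nhds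
  have hlim₂ : Tendsto (fun v => g 0 * sin t * sin v) (𝓝[>] 0) (𝓝 0) :=
    ((continuous_const.mul continuous_sin).tendsto' 0 _ (by simp)).mono_left nhdsWithin_le_nhds
  have := le_of_tendsto_of_tendsto hlim₁ hlim₂
    (eventually_of_mem (Ioo_mem_nhdsGT (half_pos ht0)) key)
  linarith

theorem le_pi_div_two (hg : SinConcaveOn (Icc 0 τ) g) (hτ : τ < π)
    (hmax : ∀ x ∈ Icc 0 τ, g x ≤ g 0) (h0 : 0 < g 0) (hτg : 0 ≤ g τ) :
    τ ≤ π / 2 := by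
  by_contra! h
  have hcos : cos τ < 0 := cos_neg_of_pi_div_two_lt_of_lt h (by linarith)
  have := hg.le_mul_cos hτ hmax (right_mem_Icc.2 (by linarith [pi_pos]))
  nlinarith

theorem pos_of_mem_Ioo (hg : SinConcaveOn (Icc 0 τ) g) (hτ : τ < π) (h0 : 0 < g 0)
    (hτg : 0 ≤ g τ) {u : ℝ} (hu : u ∈ Ioo 0 τ) : 0 < g u := by
  have h3 := hg.sin_mul_add_sin_mul_le (left_mem_Icc.2 (hu.1.trans hu.2).le)
    (right_mem_Icc.2 (hu.1.trans hu.2).le) hu.1 hu.2 (by linarith)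
  rw [sub_zero, sub_zero] at h3
  have hsτu : 0 < sin (τ - u) :=
    sin_pos_of_pos_of_lt_pi (by linarith [hu.2]) (by linarith [hu.1])
  have hsu : 0 ≤ sin u := sin_nonneg_of_nonneg_of_le_pi hu.1.le (by linarith [hu.2])
  exact pos_of_mul_pos_right (by nlinarith) (sin_pos_of_pos_of_lt_pi (hu.1.trans hu.2) hτ).le

theorem mul_cos_le_mul_cos (hg : SinConcaveOn (Icc 0 τ) g) (hτ : τ ≤ π / 2)
    (hmax : ∀ x ∈ Icc 0 τ, g x ≤ g 0) {a b : ℝ} (ha : 0 ≤ a) (hab : a ≤ b) (hb : b ≤ τ) :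
    g b * cos a ≤ g a * cos b := by
  have hτπ : τ < π := by linarith [pi_pos]
  obtain rfl | ha0 := ha.eq_or_lt
  · simpa [mul_comm] using hg.le_mul_cos hτπ hmax ⟨hab, hb⟩
  obtain rfl | hab := hab.eq_or_lt
  · rfl
  have hsb : 0 < sin b := sin_pos_of_pos_of_lt_pi (ha0.trans hab) (by linarith)
  have hcb : 0 ≤ cos b := cos_nonneg_of_mem_Icc ⟨by linarith, by linarith⟩
  have hsba : 0 ≤ sin (b - a) := sin_nonneg_of_nonneg_of_le_pi (by linarith) (by linarith)
  have h3 := hg.sin_mul_add_sin_mul_le (left_mem_Icc.2 (by linarith)) ⟨by linarith, hb⟩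
    ha0 hab (by linarith)
  have hcos := mul_le_mul_of_nonneg_left (hg.le_mul_cos hτπ hmax ⟨by linarith, hb⟩) hsba
  have h3' := mul_le_mul_of_nonneg_right h3 hcb
  rw [sub_zero, sub_zero] at h3'
  rw [sin_sub] at hcos h3'
  refine le_of_mul_le_mul_left ?_ hsb
  linear_combination hcos + h3'

end SinConcaveOn

namespace SinPowConcaveOn

variable {k : ℕ} {I : Set ℝ} {f : ℝ → ℝ} {τ : ℝ}

theorem sinConcaveOn_rpow (hf : SinPowConcaveOn k I f) :
    SinConcaveOn I fun x => f x ^ (1 / (k : ℝ)) := by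
  intro x₁ h₁ x₂ h₂ hne α hα hα₁
  simpa only [Nat.cast_one, div_one, rpow_one] using hf x₁ h₁ x₂ h₂ hne α hα hα₁

theorem le_pi_div_two (hf : SinPowConcaveOn k (Icc 0 τ) f) (hf₀ : ∀ x ∈ Icc 0 τ, 0 ≤ f x)
    (hτ₀ : 0 ≤ τ) (hτ : τ < π) (hmax : ∀ x ∈ Icc 0 τ, f x ≤ f 0) (h0 : 0 < f 0) :
    τ ≤ π / 2 :=
  hf.sinConcaveOn_rpow.le_pi_div_two hτ
    (fun x hx => rpow_le_rpow (hf₀ x hx) (hmax x hx) (by positivity)) (rpow_pos_of_pos h0 _)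
    (rpow_nonneg (hf₀ τ (right_mem_Icc.2 hτ₀)) _)

theorem pos_of_mem_Ioo (hf : SinPowConcaveOn k (Icc 0 τ) f) (hf₀ : ∀ x ∈ Icc 0 τ, 0 ≤ f x)
    (hk : k ≠ 0) (hτ : τ < π) (h0 : 0 < f 0) {u : ℝ} (hu : u ∈ Ioo 0 τ) : 0 < f u := by
  have hgu := hf.sinConcaveOn_rpow.pos_of_mem_Ioo hτ (rpow_pos_of_pos h0 _)
    (rpow_nonneg (hf₀ τ (right_mem_Icc.2 (hu.1.trans hu.2).le)) _) hu
  rw [← rpow_inv_natCast_pow (hf₀ u (Ioo_subset_Icc_self hu)) hk, ← one_div]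
  positivity

theorem mul_cos_pow_le_mul_cos_pow (hf : SinPowConcaveOn k (Icc 0 τ) f)
    (hf₀ : ∀ x ∈ Icc 0 τ, 0 ≤ f x) (hk : k ≠ 0) (hτ : τ ≤ π / 2)
    (hmax : ∀ x ∈ Icc 0 τ, f x ≤ f 0) {a b : ℝ} (ha : 0 ≤ a) (hab : a ≤ b) (hb : b ≤ τ) :
    f b * cos a ^ k ≤ f a * cos b ^ k := by
  have hg := hf.sinConcaveOn_rpow.mul_cos_le_mul_cos hτ
    (fun x hx => rpow_le_rpow (hf₀ x hx) (hmax x hx) (by positivity)) ha hab hb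
  have hpow := pow_le_pow_left₀ (mul_nonneg (rpow_nonneg (hf₀ b ⟨ha.trans hab, hb⟩) _)
    (cos_nonneg_of_mem_Icc ⟨by linarith [pi_pos], by linarith⟩)) hg k
  rwa [mul_pow, mul_pow, one_div, rpow_inv_natCast_pow (hf₀ b ⟨ha.trans hab, hb⟩) hk,
    rpow_inv_natCast_pow (hf₀ a ⟨ha, hab.trans hb⟩) hk] at hpow

end SinPowConcaveOn

theorem div_integral_le_div_integral_of_ratio_antitone {f w : ℝ → ℝ} {a b c : ℝ}
    (hab : a ≤ b) (hbc : b ≤ c) (hfi : IntervalIntegrable f volume a c)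
    (hwi : IntervalIntegrable w volume a c) (hw₀ : ∀ x ∈ Icc a c, 0 ≤ w x) (hwb : 0 < w b)
    (hratio : ∀ x ∈ Icc a c, ∀ y ∈ Icc a c, x ≤ y → f y * w x ≤ f x * w y)
    (hf : 0 < ∫ x in a..c, f x) (hw : 0 < ∫ x in a..c, w x) :
    (∫ x in a..b, w x) / (∫ x in a..c, w x) ≤ (∫ x in a..b, f x) / ∫ x in a..c, f x := by
  have hbmem : b ∈ Icc a c := ⟨hab, hbc⟩
  have hsub₁ : uIcc a b ⊆ uIcc a c := uIcc_subset_uIcc_left (Icc_subset_uIcc hbmem)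
  have hsub₂ : uIcc b c ⊆ uIcc a c := uIcc_subset_uIcc_right (Icc_subset_uIcc hbmem)
  have hleft : f b * ∫ x in a..b, w x ≤ (∫ x in a..b, f x) * w b := by
    rw [← intervalIntegral.integral_const_mul, ← intervalIntegral.integral_mul_const]
    exact integral_mono_on hab ((hwi.mono_set hsub₁).const_mul _)
      ((hfi.mono_set hsub₁).mul_const _)
      fun x hx => hratio x ⟨hx.1, hx.2.trans hbc⟩ b hbmem hx.2
  have hright : (∫ x in b..c, f x) * w b ≤ f b * ∫ x in b..c, w x := by
    rw [← intervalIntegral.integral_const_mul, ← intervalIntegral.integral_mul_const]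
    exact integral_mono_on hbc ((hfi.mono_set hsub₂).mul_const _)
      ((hwi.mono_set hsub₂).const_mul _)
      fun x hx => hratio b hbmem x ⟨hab.trans hx.1, hx.2⟩ hx.1
  have hC : 0 ≤ ∫ x in a..b, w x :=
    integral_nonneg hab fun x hx => hw₀ x ⟨hx.1, hx.2.trans hbc⟩
  have hD : 0 ≤ ∫ x in b..c, w x :=
    integral_nonneg hbc fun x hx => hw₀ x ⟨hab.trans hx.1, hx.2⟩
  have hcross :
      (∫ x in a..b, w x) * (∫ x in b..c, f x) ≤ (∫ x in a..b, f x) * ∫ x in b..c, w x :=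
    le_of_mul_le_mul_left (by linear_combination mul_le_mul_of_nonneg_left hright hC +
      mul_le_mul_of_nonneg_right hleft hD) hwb
  rw [div_le_div_iff₀ hw hf,
    ← integral_add_adjacent_intervals (hfi.mono_set hsub₁) (hfi.mono_set hsub₂),
    ← integral_add_adjacent_intervals (hwi.mono_set hsub₁) (hwi.mono_set hsub₂)]
  linarith

theorem cos_pow_nonneg_of_mem_Icc (k : ℕ) {t : ℝ} (ht : t ∈ Icc 0 (π / 2)) :
    0 ≤ cos t ^ k :=
  pow_nonneg (cos_nonneg_of_mem_Icc ⟨by linarith [pi_pos, ht.1], ht.2⟩) k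

theorem integral_cos_pow_pos (k : ℕ) {b : ℝ} (hb : 0 < b) (hb' : b ≤ π / 2) :
    0 < ∫ t in (0 : ℝ)..b, cos t ^ k :=
  intervalIntegral_pos_of_pos_on ((continuous_cos.pow k).intervalIntegrable _ _)
    (fun _ ht => pow_pos (cos_pos_of_mem_Ioo ⟨by linarith [pi_pos, ht.1], by linarith [ht.2]⟩)
      k) hb

theorem integral_cos_pow_mono (k : ℕ) {a b : ℝ} (ha : 0 ≤ a) (hab : a ≤ b)
    (hb : b ≤ π / 2) :
    ∫ t in (0 : ℝ)..a, cos t ^ k ≤ ∫ t in (0 : ℝ)..b, cos t ^ k :=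
  integral_mono_interval le_rfl ha hab
    ((ae_restrict_mem measurableSet_Ioc).mono fun _ ht =>
      cos_pow_nonneg_of_mem_Icc k ⟨ht.1.le, ht.2.trans hb⟩)
    ((continuous_cos.pow k).intervalIntegrable _ _)

theorem integral_cos_pow_nonneg (k : ℕ) {b : ℝ} (hb : 0 ≤ b) (hb' : b ≤ π / 2) :
    0 ≤ ∫ t in (0 : ℝ)..b, cos t ^ k := by
  simpa using integral_cos_pow_mono k le_rfl hb hb'

/-- For a nonzero `sin^k`-concave function `f : [0,τ] → [0,∞)` attaining its maximum at
`0`, one has `τ ≤ π/2` and, for every `ε ∈ [0,π/2]`,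
`(∫₀^{min(ε,τ)} f)/(∫₀^τ f) ≥ (∫₀^ε cos^k)/(∫₀^{π/2} cos^k)`. -/
theorem sinPowConcave_mass_ratio (k : ℕ) (hk : 1 ≤ k)
    (τ : ℝ) (hτ0 : 0 < τ) (hτ : τ < Real.pi)
    (f : ℝ → ℝ) (hfc : ContinuousOn f (Set.Icc 0 τ))
    (hfnonneg : ∀ x ∈ Set.Icc 0 τ, 0 ≤ f x)
    (hfne : ∃ x ∈ Set.Icc 0 τ, f x ≠ 0)
    (hconc : SinPowConcaveOn k (Set.Icc 0 τ) f)
    (hmax : ∀ x ∈ Set.Icc 0 τ, f x ≤ f 0) :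
    τ ≤ Real.pi / 2 ∧
      ∀ ε ∈ Set.Icc (0 : ℝ) (Real.pi / 2),
        (∫ t in (0 : ℝ)..ε, Real.cos t ^ k) /
            (∫ t in (0 : ℝ)..(Real.pi / 2), Real.cos t ^ k) ≤
          (∫ t in (0 : ℝ)..(min ε τ), f t) / (∫ t in (0 : ℝ)..τ, f t) := by
  obtain ⟨x₀, hx₀, hfx₀⟩ := hfne
  have hk₀ : k ≠ 0 := by omega
  have hf0 : 0 < f 0 := ((hfnonneg x₀ hx₀).lt_of_ne' hfx₀).trans_le (hmax x₀ hx₀)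
  have hτ₂ : τ ≤ π / 2 := hconc.le_pi_div_two hfnonneg hτ0.le hτ hmax hf0
  have hfi : IntervalIntegrable f volume 0 τ := hfc.intervalIntegrable_of_Icc hτ0.le
  have hF : 0 < ∫ t in (0 : ℝ)..τ, f t :=
    intervalIntegral_pos_of_pos_on hfi (fun u => hconc.pos_of_mem_Ioo hfnonneg hk₀ hτ hf0) hτ0
  have hC : 0 < ∫ t in (0 : ℝ)..τ, cos t ^ k := integral_cos_pow_pos k hτ0 hτ₂
  refine ⟨hτ₂, fun ε hε => ?_⟩
  rcases le_or_gt τ ε with hτε | hετ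
  · rw [min_eq_right hτε, div_self hF.ne']
    exact div_le_one_of_le₀ (integral_cos_pow_mono k hε.1 hε.2 le_rfl)
      (integral_cos_pow_pos k pi_div_two_pos le_rfl).le
  · rw [min_eq_left hετ.le]
    calc (∫ t in (0 : ℝ)..ε, cos t ^ k) / (∫ t in (0 : ℝ)..(π / 2), cos t ^ k)
        ≤ (∫ t in (0 : ℝ)..ε, cos t ^ k) / ∫ t in (0 : ℝ)..τ, cos t ^ k :=
          div_le_div_of_nonneg_left (integral_cos_pow_nonneg k hε.1 hε.2) hC
            (integral_cos_pow_mono k hτ0.le hτ₂ le_rfl)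
      _ ≤ (∫ t in (0 : ℝ)..ε, f t) / ∫ t in (0 : ℝ)..τ, f t :=
          div_integral_le_div_integral_of_ratio_antitone hε.1 hετ.le hfi
            ((continuous_cos.pow k).intervalIntegrable _ _)
            (fun x hx => cos_pow_nonneg_of_mem_Icc k ⟨hx.1, hx.2.trans hτ₂⟩)
            (pow_pos (cos_pos_of_mem_Ioo ⟨by linarith [pi_pos, hε.1], by linarith⟩) k)
            (fun x hx y hy hxy =>
              hconc.mul_cos_pow_le_mul_cos_pow hfnonneg hk₀ hτ₂ hmax hx.1 hxy hy.2)
            hF hC
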